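/- Let Y_i(t), i = 1,…,N, be Gaussian random vectors in ℝ^d indexed by t, with common covariance Σ(t) (homogeneous mobility) diagonalized as PᵀΣ^{−1}P = diag(1/σ₁(t)²,…,1/σ_d(t)²), and transformed means η^{(i)}(t) = Pᵀμ_i(t). Suppose for every a and all i, j, lim_{t→∞} η_a^{(i)}(t)/σ_a(t) and lim_{t→∞} η_a^{(j)}(t)/σ_a(t) exist and are equal. Then for every bounded continuous radial function ν, lim_{t→∞} (E[ν(‖Y_i(t)‖)] − E[ν(‖Y_j(t)‖)]) = 0. -/

import Mathlib

/-!
Write `p_i` for the density of `Y_i(t)` in diagonalized coordinates. For `|ν| ≤ M` we have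
`|G_i[ν] - G_j[ν]| ≤ M ‖p_i - p_j‖₁`. Both densities are products of one-dimensional Gaussians
with the same standard deviations `σ_a(t)`, so telescoping over the coordinates bounds
`‖p_i - p_j‖₁` by the sum of the one-dimensional distances, and rescaling coordinate `a` by
`σ_a(t)` turns each of these into the distance between the standard Gaussians centred at
`η_a^{(i)}(t)/σ_a(t)` and `η_a^{(j)}(t)/σ_a(t)`. Both centres tend to `L_a`, and Scheffé's lemma
makes the `L¹` distance of each to the standard Gaussian centred at `L_a` tend to `0`.
-/

open MeasureTheory Real Filter Finset ProbabilityTheory NNReal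

/-- Scheffé's lemma. -/
theorem tendsto_integral_abs_sub_of_tendsto {α ι : Type*} [MeasurableSpace α] {μ : Measure α}
    {l : Filter ι} [l.IsCountablyGenerated] {p : ι → α → ℝ} {q : α → ℝ}
    (hp_nonneg : ∀ n x, 0 ≤ p n x) (hp : ∀ n, Integrable (p n) μ) (hq : Integrable q μ)
    (h_integral : ∀ n, ∫ x, p n x ∂μ = ∫ x, q x ∂μ)
    (h_lim : ∀ᵐ x ∂μ, Tendsto (fun n => p n x) l (nhds (q x))) :
    Tendsto (fun n => ∫ x, |p n x - q x| ∂μ) l (nhds 0) := by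
  -- Equal masses turn `∫ |p - q|` into `2 ∫ (q - p)⁺`, and `0 ≤ (q - p)⁺ ≤ |q|` is dominated.
  have h_eq : ∀ n, ∫ x, |p n x - q x| ∂μ = 2 * ∫ x, max (q x - p n x) 0 ∂μ := by
    intro n
    have h_pos : Integrable (fun x => max (q x - p n x) 0) μ := (hq.sub (hp n)).pos_part
    have h_abs : (fun x => |p n x - q x|) = fun x => 2 * max (q x - p n x) 0 + (p n x - q x) := by
      ext x
      rcases le_total (p n x) (q x) with h | h
      · rw [abs_of_nonpos (by linarith), max_eq_left (by linarith)]; ring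
      · rw [abs_of_nonneg (by linarith), max_eq_right (by linarith)]; ring
    have h_sub : Integrable (fun x => p n x - q x) μ := (hp n).sub hq
    rw [h_abs, integral_add (h_pos.const_mul 2) h_sub, integral_sub (hp n) hq,
      h_integral, sub_self, add_zero, integral_const_mul]
  simp only [h_eq]
  suffices Tendsto (fun n => ∫ x, max (q x - p n x) 0 ∂μ) l (nhds (∫ _, (0 : ℝ) ∂μ)) by
    simpa using this.const_mul 2
  refine tendsto_integral_filter_of_dominated_convergence (fun x => |q x|)
    (Eventually.of_forall fun n => (hq.sub (hp n)).pos_part.aestronglyMeasurable)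
    (Eventually.of_forall fun n => Eventually.of_forall fun x => ?_) hq.abs ?_
  · rw [norm_of_nonneg (le_max_right _ _)]
    exact max_le (by linarith [hp_nonneg n x, le_abs_self (q x)]) (abs_nonneg _)
  · filter_upwards [h_lim] with x hx
    simpa using ((tendsto_const_nhds (x := q x)).sub hx).max (tendsto_const_nhds (x := (0 : ℝ)))

lemma abs_integral_mul_sub_integral_mul_le {α : Type*} [MeasurableSpace α] {μ : Measure α}
    {f p q : α → ℝ} {M : ℝ} (hf : AEStronglyMeasurable f μ) (hM : ∀ x, |f x| ≤ M)
    (hp : Integrable p μ) (hq : Integrable q μ) :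
    |∫ x, f x * p x ∂μ - ∫ x, f x * q x ∂μ| ≤ M * ∫ x, |p x - q x| ∂μ := by
  have h_mul : ∀ {r : α → ℝ}, Integrable r μ → Integrable (fun x => f x * r x) μ :=
    fun hr => hr.bdd_mul hf (ae_of_all _ hM)
  rw [← integral_sub (h_mul hp) (h_mul hq), ← integral_const_mul, ← Real.norm_eq_abs]
  refine norm_integral_le_of_norm_le (((hp.sub hq).abs).const_mul M) (ae_of_all _ fun x => ?_)
  rw [Real.norm_eq_abs, ← mul_sub, abs_mul]
  exact mul_le_mul_of_nonneg_right (hM x) (abs_nonneg _)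

lemma abs_prod_sub_prod_le {ι R : Type*} [LinearOrder ι] [CommRing R] [LinearOrder R]
    [IsStrictOrderedRing R] (s : Finset ι) {f g : ι → R} (hf : ∀ i, 0 ≤ f i)
    (hg : ∀ i, 0 ≤ g i) :
    |∏ i ∈ s, f i - ∏ i ∈ s, g i| ≤
      ∑ i ∈ s, (∏ j ∈ s with j < i, f j) * |f i - g i| * ∏ j ∈ s with i < j, g j := by
  have h_telescope := prod_add_ordered s g (f - g)
  simp only [Pi.sub_apply, add_sub_cancel] at h_telescope
  rw [h_telescope, add_sub_cancel_left]
  refine (abs_sum_le_sum_abs _ _).trans (le_of_eq (sum_congr rfl fun i _ => ?_))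
  rw [abs_mul, abs_mul, abs_of_nonneg (prod_nonneg fun j _ => hf j),
    abs_of_nonneg (prod_nonneg fun j _ => hg j)]
  ring

lemma prod_ite_lt_ite_gt {ι R : Type*} [Fintype ι] [LinearOrder ι] [CommMonoid R] (i : ι)
    (a b c : ι → R) :
    ∏ j, (if j < i then a j else if i < j then b j else c j) =
      (∏ j with j < i, a j) * c i * ∏ j with i < j, b j := by
  rw [prod_ite, prod_ite, filter_filter, filter_filter, mul_assoc, mul_comm (c i)]
  congr 2
  · congr 1
    ext j
    simp only [mem_filter, mem_univ, true_and]
    exact ⟨And.right, fun h => ⟨lt_asymm h, h⟩⟩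
  · rw [prod_eq_single i (fun j hj hji => ?_) (by simp)]
    simp only [mem_filter, not_lt] at hj
    exact absurd (le_antisymm hj.2.2 hj.2.1) hji

lemma integral_abs_prod_sub_prod_le {ι : Type*} [Fintype ι] [LinearOrder ι] {f g : ι → ℝ → ℝ}
    (hf_nonneg : ∀ i x, 0 ≤ f i x) (hg_nonneg : ∀ i x, 0 ≤ g i x)
    (hf : ∀ i, Integrable (f i)) (hg : ∀ i, Integrable (g i))
    (hf_one : ∀ i, ∫ x, f i x = 1) (hg_one : ∀ i, ∫ x, g i x = 1) :
    ∫ w : ι → ℝ, |∏ i, f i (w i) - ∏ i, g i (w i)| ≤ ∑ i, ∫ x, |f i x - g i x| := by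
  -- `h i` lists the one-dimensional factors of the `i`-th telescoping term; all but the `i`-th
  -- integrate to `1`.
  let h : ι → ι → ℝ → ℝ := fun i j =>
    if j < i then f j else if i < j then g j else fun x => |f i x - g i x|
  have h_int : ∀ i j, Integrable (h i j) := fun i j => by
    unfold h; split_ifs
    exacts [hf j, hg j, ((hf i).sub (hg i)).abs]
  have h_integral : ∀ i j, ∫ x, h i j x = if j = i then ∫ x, |f i x - g i x| else 1 := by
    intro i j
    rcases lt_trichotomy j i with hji | rfl | hij
    · simp [h, hji, hji.ne, hf_one]
    · simp [h]
    · simp [h, hij, hij.ne', not_lt_of_gt hij, hg_one]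
  have h_prod : ∀ i (w : ι → ℝ), ∏ j, h i j (w j) =
      (∏ j with j < i, f j (w j)) * |f i (w i) - g i (w i)| * ∏ j with i < j, g j (w j) := by
    intro i w
    rw [← prod_ite_lt_ite_gt i _ _ fun j => |f i (w j) - g i (w j)|]
    exact prod_congr rfl fun j _ => by unfold h; split_ifs <;> rfl
  calc ∫ w : ι → ℝ, |∏ i, f i (w i) - ∏ i, g i (w i)|
      ≤ ∫ w : ι → ℝ, ∑ i, ∏ j, h i j (w j) := by
        refine integral_mono_of_nonneg (ae_of_all _ fun _ => abs_nonneg _)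
          (integrable_finsetSum _ fun i _ => Integrable.fintype_prod (h_int i))
          (ae_of_all _ fun w => ?_)
        simpa only [h_prod] using
          abs_prod_sub_prod_le univ (fun i => hf_nonneg i (w i)) fun i => hg_nonneg i (w i)
    _ = ∑ i, ∫ x, |f i x - g i x| := by
        rw [integral_finsetSum (μ := volume) _ fun i _ => Integrable.fintype_prod (h_int i)]
        simp only [integral_fintype_prod_volume_eq_prod, h_integral, prod_ite_eq', mem_univ,
          if_true]

lemma gaussianPDFReal_sq_apply (m : ℝ) {s : ℝ} (hs : 0 < s) (x : ℝ) :
    gaussianPDFReal m (s ^ 2).toNNReal x =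
      1 / (√(2 * π) * s) * rexp (-(x - m) ^ 2 / (2 * s ^ 2)) := by
  rw [gaussianPDFReal_def, Real.coe_toNNReal _ (sq_nonneg s), Real.sqrt_mul (by positivity),
    Real.sqrt_sq hs.le, one_div]

lemma integral_abs_gaussianPDFReal_sub_rescale (m₁ m₂ : ℝ) {s : ℝ} (hs : 0 < s) :
    ∫ x, |gaussianPDFReal m₁ (s ^ 2).toNNReal x - gaussianPDFReal m₂ (s ^ 2).toNNReal x| =
      ∫ x, |gaussianPDFReal (m₁ / s) 1 x - gaussianPDFReal (m₂ / s) 1 x| := by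
  have h_var : NNReal.mk (s ^ 2)⁻¹ (inv_nonneg.mpr (sq_nonneg s)) * (s ^ 2).toNNReal = 1 :=
    NNReal.eq <| by
      rw [NNReal.coe_mul, NNReal.coe_mk, Real.coe_toNNReal _ (sq_nonneg s), NNReal.coe_one,
        inv_mul_cancel₀ (by positivity)]
  have h_scale : ∀ m x, gaussianPDFReal m (s ^ 2).toNNReal (s * x) =
      s⁻¹ * gaussianPDFReal (m / s) 1 x := fun m x => by
    rw [gaussianPDFReal_mul hs.ne', h_var, abs_of_pos (inv_pos.2 hs), div_eq_inv_mul]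
  have h := Measure.integral_comp_mul_left
    (fun x => |gaussianPDFReal m₁ (s ^ 2).toNNReal x - gaussianPDFReal m₂ (s ^ 2).toNNReal x|) s
  simp only [h_scale, ← mul_sub, abs_mul, integral_const_mul, smul_eq_mul,
    abs_of_pos (inv_pos.2 hs)] at h
  exact (mul_left_cancel₀ (inv_ne_zero hs.ne') h).symm

lemma tendsto_integral_abs_gaussianPDFReal_sub {ι : Type*} {l : Filter ι}
    [l.IsCountablyGenerated] {u w : ι → ℝ} {L : ℝ} {v : ℝ≥0} (hv : v ≠ 0)
    (hu : Tendsto u l (nhds L)) (hw : Tendsto w l (nhds L)) :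
    Tendsto (fun n => ∫ x, |gaussianPDFReal (u n) v x - gaussianPDFReal (w n) v x|) l
      (nhds 0) := by
  have h_to_L : ∀ {u : ι → ℝ}, Tendsto u l (nhds L) →
      Tendsto (fun n => ∫ x, |gaussianPDFReal (u n) v x - gaussianPDFReal L v x|) l (nhds 0) :=
    fun hu => tendsto_integral_abs_sub_of_tendsto (fun _ _ => gaussianPDFReal_nonneg _ _ _)
      (fun _ => integrable_gaussianPDFReal _ _) (integrable_gaussianPDFReal _ _)
      (fun _ => by rw [integral_gaussianPDFReal_eq_one _ hv, integral_gaussianPDFReal_eq_one _ hv])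
      (ae_of_all _ fun x => ((by unfold gaussianPDFReal; fun_prop :
        Continuous fun m => gaussianPDFReal m v x).tendsto L).comp hu)
  refine squeeze_zero (fun _ => integral_nonneg fun _ => abs_nonneg _) (fun n => ?_)
    (by simpa using (h_to_L hu).add (h_to_L hw))
  have h_int : ∀ m, Integrable (fun x => |gaussianPDFReal m v x - gaussianPDFReal L v x|) :=
    fun m => ((integrable_gaussianPDFReal _ _).sub (integrable_gaussianPDFReal _ _)).abs
  rw [← integral_add (h_int _) (h_int _)]
  refine integral_mono ((integrable_gaussianPDFReal _ _).sub (integrable_gaussianPDFReal _ _)).abs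
    ((h_int _).add (h_int _)) fun x => ?_
  exact (abs_sub_le _ _ _).trans (by rw [abs_sub_comm (gaussianPDFReal L v x)])

/-- sufficiency direction of the Gaussian BPP approximation:
for Gaussian vectors `Y_i(t)` with common (diagonalized) covariance
`diag(σ₁(t)²,…,σ_d(t)²)` and transformed means `η^{(i)}(t)`, if the limits
`lim_{t→∞} η_a^{(i)}(t)/σ_a(t)` exist and agree for all `i`, then for every bounded
continuous radial function `ν`, `E[ν(‖Y_i(t)‖)] − E[ν(‖Y_j(t)‖)] → 0`. -/
theorem gaussian_bpp_approximation_sufficiency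
    {d N : ℕ} (η : Fin N → ℝ → Fin d → ℝ) (σ : ℝ → Fin d → ℝ)
    (hσ : ∀ t a, 0 < σ t a)
    -- the normalized means have common limits
    (hlim : ∃ L : Fin d → ℝ, ∀ i a,
      Tendsto (fun t => η i t a / σ t a) atTop (nhds (L a)))
    -- the Gaussian expectation of a radial function, in diagonalized coordinates
    (G : Fin N → (ℝ → ℝ) → ℝ → ℝ)
    (hG : ∀ i ν t, G i ν t =
      ∫ z : EuclideanSpace ℝ (Fin d), ν ‖z‖ *
        ∏ a, (1 / (Real.sqrt (2 * π) * σ t a)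
          * Real.exp (-(z a - η i t a) ^ 2 / (2 * (σ t a) ^ 2)))) :
    ∀ ν : ℝ → ℝ, Continuous ν → (∃ M, ∀ r, |ν r| ≤ M) →
      ∀ i j : Fin N, Tendsto (fun t => G i ν t - G j ν t) atTop (nhds 0) := by
  rintro ν hν ⟨M, hM⟩ i j
  obtain ⟨L, hL⟩ := hlim
  have hG_pi : ∀ k t, G k ν t = ∫ w : Fin d → ℝ, ν ‖WithLp.toLp 2 w‖ *
      ∏ a, gaussianPDFReal (η k t a) (σ t a ^ 2).toNNReal (w a) := fun k t => by
    rw [hG, ← (PiLp.volume_preserving_ofLp (Fin d)).integral_comp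
      (MeasurableEquiv.toLp 2 (Fin d → ℝ)).symm.measurableEmbedding]
    simp only [gaussianPDFReal_sq_apply _ (hσ t _), WithLp.toLp_ofLp]
  have h_bound : ∀ t, |G i ν t - G j ν t| ≤ M * ∑ a, ∫ x,
      |gaussianPDFReal (η i t a / σ t a) 1 x - gaussianPDFReal (η j t a / σ t a) 1 x| := by
    intro t
    have h_var : ∀ a, (σ t a ^ 2).toNNReal ≠ 0 := fun a =>
      (Real.toNNReal_pos.mpr (pow_pos (hσ t a) 2)).ne'
    rw [hG_pi, hG_pi]
    refine (abs_integral_mul_sub_integral_mul_le (hν.comp (by fun_prop)).aestronglyMeasurable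
      (fun _ => hM _) (Integrable.fintype_prod fun a => integrable_gaussianPDFReal _ _)
      (Integrable.fintype_prod fun a => integrable_gaussianPDFReal _ _)).trans
      (mul_le_mul_of_nonneg_left ?_ ((abs_nonneg _).trans (hM 0)))
    refine (integral_abs_prod_sub_prod_le
      (f := fun a => gaussianPDFReal (η i t a) (σ t a ^ 2).toNNReal)
      (g := fun a => gaussianPDFReal (η j t a) (σ t a ^ 2).toNNReal)
      (fun _ _ => gaussianPDFReal_nonneg _ _ _)
      (fun _ _ => gaussianPDFReal_nonneg _ _ _) (fun _ => integrable_gaussianPDFReal _ _)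
      (fun _ => integrable_gaussianPDFReal _ _)
      (fun a => integral_gaussianPDFReal_eq_one (η i t a) (h_var a))
      (fun a => integral_gaussianPDFReal_eq_one (η j t a) (h_var a))).trans_eq ?_
    exact sum_congr rfl fun a _ => integral_abs_gaussianPDFReal_sub_rescale _ _ (hσ t a)
  refine squeeze_zero_norm h_bound ?_
  simpa using (tendsto_finsetSum _ fun a _ =>
    tendsto_integral_abs_gaussianPDFReal_sub one_ne_zero (hL i a) (hL j a)).const_mul M
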